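/- For every x ∈ ℝⁿ, q ∈ ℝ and T₁, T₂ > 0 one has the subadditivity S^{xx}_{T₁+T₂}(q) ≤ S^{xx}_{T₁}(q) + S^{xx}_{T₂}(q). -/

import Mathlib

open MeasureTheory Filter Real Set
open scoped InnerProductSpace

noncomputable section

/-- Euclidean space ℝⁿ. -/
abbrev Euc (n : ℕ) := EuclideanSpace ℝ (Fin n)

/-- `InHT n T x φ φ'` : `φ : [0,T] → ℝⁿ` is an absolutely continuous path starting at `x`,
with (a.e.) derivative `φ'` which is square integrable on `[0,T]`. -/
def InHT (n : ℕ) (T : ℝ) (x : Euc n) (φ φ' : ℝ → Euc n) : Prop :=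
  φ 0 = x ∧
  IntervalIntegrable φ' volume 0 T ∧
  IntervalIntegrable (fun t => ‖φ' t‖ ^ 2) volume 0 T ∧
  ∀ t ∈ Set.Icc (0 : ℝ) T, φ t = x + ∫ s in (0 : ℝ)..t, φ' s

/-- Freidlin–Wentzell action functional `I^x_T`. -/
def FW (n : ℕ) (c : Euc n → Euc n) (T : ℝ) (φ φ' : ℝ → Euc n) : ℝ :=
  (1 / 2) * ∫ t in (0 : ℝ)..T, ‖φ' t - c (φ t)‖ ^ 2

/-- Power dissipated by the vector field `b` along the path, `L_T`. -/
def Diss (n : ℕ) (b : Euc n → Euc n) (T : ℝ) (φ φ' : ℝ → Euc n) : ℝ :=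
  (2 / T) * ∫ t in (0 : ℝ)..T, ⟪b (φ t), φ' t⟫_ℝ

/-- `S^{xy}_T(q)`, infimum of the action over paths from `x` to `y` dissipating power `q`. -/
def Sxy (n : ℕ) (b c : Euc n → Euc n) (T : ℝ) (x y : Euc n) (q : ℝ) : ℝ :=
  sInf { r : ℝ | ∃ φ φ' : ℝ → Euc n,
    InHT n T x φ φ' ∧ φ T = y ∧ Diss n b T φ φ' = q ∧ FW n c T φ φ' = r }

/-- `S^{x}_T(q)`, infimum of the action over paths from `x` with free endpoint. -/
def Sx (n : ℕ) (b c : Euc n → Euc n) (T : ℝ) (x : Euc n) (q : ℝ) : ℝ :=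
  sInf { r : ℝ | ∃ φ φ' : ℝ → Euc n,
    InHT n T x φ φ' ∧ Diss n b T φ φ' = q ∧ FW n c T φ φ' = r }

/-- `s^x(q) = inf_{T>0} S^{xx}_T(q)/T`. -/
def sfun (n : ℕ) (b c : Euc n → Euc n) (x : Euc n) (q : ℝ) : ℝ :=
  sInf { r : ℝ | ∃ T : ℝ, 0 < T ∧ r = Sxy n b c T x x q / T }

/-- Assumption (A). -/
def AssumptionA (n : ℕ) (V : Euc n → ℝ) : Prop :=
  ContDiff ℝ 2 V ∧
  Tendsto (fun x : Euc n => ⟪gradient V x, x⟫_ℝ / ‖x‖) (cocompact (Euc n)) atTop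

/-- Assumption (B): `b` is `C¹`, bounded with bounded derivative and not conservative. -/
def AssumptionB (n : ℕ) (b : Euc n → Euc n) : Prop :=
  ContDiff ℝ 1 b ∧
  (∃ M : ℝ, ∀ x, ‖b x‖ ≤ M) ∧
  (∃ M : ℝ, ∀ x, ‖fderiv ℝ b x‖ ≤ M) ∧
  ¬ ∃ F : Euc n → ℝ, Differentiable ℝ F ∧ ∀ x, gradient F x = b x

/-!
Concatenating a loop of duration `T₁` with one of duration `T₂`, both dissipating power `q`,
gives a loop of duration `T₁ + T₂` dissipating power `q` whose action is the sum of the two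
actions. This proves the inequality as soon as loops of durations `T₁` and `T₂` exist whenever
one of duration `T₁ + T₂` does (if there is none, the left side is `sInf ∅ = 0`). A loop of
shorter duration `τ` is made from an initial piece `φ|[0, a]` of a long loop `φ`, run faster,
followed by the straight segment from `φ a` back to `x`; the intermediate value theorem chooses
`a` so that the work of `b` along the new loop is `q τ / 2`.
-/

open scoped Pointwise

lemma sInf_le_sInf_add_sInf {A B C : Set ℝ} (hA : ∀ r ∈ A, 0 ≤ r) (hB : ∀ r ∈ B, 0 ≤ r)
    (hC : BddBelow C) (hABC : A + B ⊆ C) (hne : C.Nonempty → A.Nonempty ∧ B.Nonempty) :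
    sInf C ≤ sInf A + sInf B := by
  rcases C.eq_empty_or_nonempty with rfl | hCne
  · rw [Real.sInf_empty]
    exact add_nonneg (Real.sInf_nonneg hA) (Real.sInf_nonneg hB)
  obtain ⟨hAne, hBne⟩ := hne hCne
  rw [← csInf_add hAne ⟨0, hA⟩ hBne ⟨0, hB⟩]
  exact csInf_le_csInf hC (hAne.add hBne) hABC

lemma ContDiff.continuous_gradient {m : WithTop ℕ∞} {E : Type*} [NormedAddCommGroup E]
    [InnerProductSpace ℝ E] [CompleteSpace E] {f : E → ℝ} (hf : ContDiff ℝ m f) (hm : m ≠ 0) :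
    Continuous (gradient f) :=
  (InnerProductSpace.toDual ℝ E).symm.continuous.comp (hf.continuous_fderiv hm)

lemma IntervalIntegrable.smul_comp_div_mul {E : Type*} [NormedAddCommGroup E] [NormedSpace ℝ E]
    {f : ℝ → E} {a : ℝ} (hf : IntervalIntegrable f volume 0 a) (s : ℝ) :
    IntervalIntegrable (fun t => (a / s) • f (a / s * t)) volume 0 s := by
  rcases eq_or_ne (a / s) 0 with h | h
  · simp [h]
  · have hcomp := hf.comp_mul_left (c := a / s)
    rw [zero_div, div_div_cancel₀ (left_ne_zero_of_mul h)] at hcomp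
    exact hcomp.smul _

section Concat

variable {α E : Type*} [NormedAddCommGroup E] {T₁ T₂ t : ℝ}

def concatAt (T₁ : ℝ) (f g : ℝ → α) (t : ℝ) : α :=
  if t ≤ T₁ then f t else g (t - T₁)

lemma concatAt_of_le {f g : ℝ → α} (h : t ≤ T₁) : concatAt T₁ f g t = f t := if_pos h

lemma concatAt_of_lt {f g : ℝ → α} (h : T₁ < t) : concatAt T₁ f g t = g (t - T₁) :=
  if_neg h.not_ge

lemma concatAt_add {f g : ℝ → α} (hT₂ : 0 < T₂) : concatAt T₁ f g (T₁ + T₂) = g T₂ := by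
  rw [concatAt_of_lt (by linarith), add_sub_cancel_left]

variable {f g : ℝ → E}

lemma intervalIntegrable_concatAt_left (hT₁ : 0 ≤ T₁) (hf : IntervalIntegrable f volume 0 T₁) :
    IntervalIntegrable (concatAt T₁ f g) volume 0 T₁ :=
  hf.congr fun s hs => by
    rw [uIoc_of_le hT₁] at hs
    exact (concatAt_of_le hs.2).symm

lemma intervalIntegrable_concatAt_right (hT₂ : 0 ≤ T₂) (hg : IntervalIntegrable g volume 0 T₂) :
    IntervalIntegrable (concatAt T₁ f g) volume T₁ (T₁ + T₂) := by
  have hshift := hg.comp_sub_right T₁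
  rw [zero_add, add_comm] at hshift
  refine hshift.congr fun s hs => ?_
  rw [uIoc_of_le (by linarith)] at hs
  exact (concatAt_of_lt hs.1).symm

lemma intervalIntegrable_concatAt (hT₁ : 0 ≤ T₁) (hT₂ : 0 ≤ T₂)
    (hf : IntervalIntegrable f volume 0 T₁) (hg : IntervalIntegrable g volume 0 T₂) :
    IntervalIntegrable (concatAt T₁ f g) volume 0 (T₁ + T₂) :=
  (intervalIntegrable_concatAt_left hT₁ hf).trans (intervalIntegrable_concatAt_right hT₂ hg)

variable [NormedSpace ℝ E]

lemma integral_concatAt_of_le (ht₀ : 0 ≤ t) (ht : t ≤ T₁) :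
    ∫ s in (0 : ℝ)..t, concatAt T₁ f g s = ∫ s in (0 : ℝ)..t, f s :=
  intervalIntegral.integral_congr_ae <| ae_of_all _ fun s hs => by
    rw [uIoc_of_le ht₀] at hs
    exact concatAt_of_le (hs.2.trans ht)

lemma integral_concatAt (hT₁ : 0 ≤ T₁) (hT₂ : 0 ≤ T₂)
    (hf : IntervalIntegrable f volume 0 T₁) (hg : IntervalIntegrable g volume 0 T₂) :
    ∫ s in (0 : ℝ)..(T₁ + T₂), concatAt T₁ f g s =
      (∫ s in (0 : ℝ)..T₁, f s) + ∫ s in (0 : ℝ)..T₂, g s := by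
  have hright : ∫ s in T₁..(T₁ + T₂), concatAt T₁ f g s = ∫ s in T₁..(T₁ + T₂), g (s - T₁) :=
    intervalIntegral.integral_congr_ae <| ae_of_all _ fun s hs => by
      rw [uIoc_of_le (by linarith)] at hs
      exact concatAt_of_lt hs.1
  rw [← intervalIntegral.integral_add_adjacent_intervals
    (intervalIntegrable_concatAt_left hT₁ hf) (intervalIntegrable_concatAt_right hT₂ hg),
    integral_concatAt_of_le hT₁ le_rfl, hright,
    intervalIntegral.integral_comp_sub_right, sub_self, add_sub_cancel_left]

end Concat

section Paths

variable {n : ℕ} {T T₁ T₂ τ a s q r₁ r₂ : ℝ} {x y z : Euc n}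
  {φ φ' φ₁ φ₁' φ₂ φ₂' : ℝ → Euc n} {b c : Euc n → Euc n}

def work (b : Euc n → Euc n) (T : ℝ) (φ φ' : ℝ → Euc n) : ℝ :=
  ∫ t in (0 : ℝ)..T, ⟪b (φ t), φ' t⟫_ℝ

lemma Diss_eq_iff (hT : 0 < T) : Diss n b T φ φ' = q ↔ work b T φ φ' = q * T / 2 := by
  unfold Diss work
  constructor <;> intro h <;> field_simp at h ⊢ <;> linarith

lemma FW_nonneg (c : Euc n → Euc n) (hT : 0 ≤ T) (φ φ' : ℝ → Euc n) : 0 ≤ FW n c T φ φ' :=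
  mul_nonneg (by norm_num) (intervalIntegral.integral_nonneg hT fun _ _ => by positivity)

namespace InHT

lemma continuousOn (h : InHT n T x φ φ') (hT : 0 ≤ T) : ContinuousOn φ (Icc 0 T) := by
  have hprim := intervalIntegral.continuousOn_primitive_interval' h.2.1 left_mem_uIcc
  rw [uIcc_of_le hT] at hprim
  exact (continuousOn_const.add hprim).congr h.2.2.2

lemma mono (h : InHT n T x φ φ') (ha : 0 ≤ a) (haT : a ≤ T) : InHT n a x φ φ' := by
  have hsub : uIcc 0 a ⊆ uIcc 0 T :=
    uIcc_subset_uIcc_left (by rw [uIcc_of_le (ha.trans haT)]; exact ⟨ha, haT⟩)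
  exact ⟨h.1, h.2.1.mono_set hsub, h.2.2.1.mono_set hsub,
    fun t ht => h.2.2.2 t ⟨ht.1, ht.2.trans haT⟩⟩

lemma aestronglyMeasurable_comp {E : Type*} [TopologicalSpace E]
    [TopologicalSpace.PseudoMetrizableSpace E] {F : Euc n → E}
    (h : InHT n T x φ φ') (hT : 0 ≤ T) (hF : Continuous F) :
    AEStronglyMeasurable (fun t => F (φ t)) (volume.restrict (Ioc 0 T)) :=
  ((hF.comp_continuousOn (h.continuousOn hT)).mono Ioc_subset_Icc_self).aestronglyMeasurable
    measurableSet_Ioc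

lemma exists_bound_comp {E : Type*} [NormedAddCommGroup E] {F : Euc n → E}
    (h : InHT n T x φ φ') (hT : 0 ≤ T) (hF : Continuous F) :
    ∃ C, ∀ t ∈ Ioc 0 T, ‖F (φ t)‖ ≤ C :=
  (isCompact_Icc.exists_bound_of_continuousOn (hF.comp_continuousOn (h.continuousOn hT))).imp
    fun _ hC t ht => hC t (Ioc_subset_Icc_self ht)

lemma intervalIntegrable_inner (h : InHT n T x φ φ') (hT : 0 ≤ T) (hb : Continuous b) :
    IntervalIntegrable (fun t => ⟪b (φ t), φ' t⟫_ℝ) volume 0 T := by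
  obtain ⟨C, hC⟩ := h.exists_bound_comp hT hb
  have hφ' := h.2.1
  rw [intervalIntegrable_iff_integrableOn_Ioc_of_le hT] at hφ' ⊢
  refine (hφ'.norm.const_mul C).mono'
    ((h.aestronglyMeasurable_comp hT hb).inner hφ'.aestronglyMeasurable) ?_
  filter_upwards [ae_restrict_mem measurableSet_Ioc] with t ht
  exact (norm_inner_le_norm _ _).trans (mul_le_mul_of_nonneg_right (hC t ht) (norm_nonneg _))

lemma intervalIntegrable_action (h : InHT n T x φ φ') (hT : 0 ≤ T) (hc : Continuous c) :
    IntervalIntegrable (fun t => ‖φ' t - c (φ t)‖ ^ 2) volume 0 T := by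
  obtain ⟨C, hC⟩ := h.exists_bound_comp hT hc
  have hφ' := h.2.1
  have hsq := h.2.2.1
  rw [intervalIntegrable_iff_integrableOn_Ioc_of_le hT] at hφ' hsq ⊢
  have hφ'L2 : MemLp φ' 2 (volume.restrict (Ioc 0 T)) :=
    (memLp_two_iff_integrable_sq_norm hφ'.aestronglyMeasurable).2 hsq
  have hcL2 : MemLp (fun t => c (φ t)) 2 (volume.restrict (Ioc 0 T)) :=
    MemLp.of_bound (h.aestronglyMeasurable_comp hT hc) C
      ((ae_restrict_mem measurableSet_Ioc).mono hC)
  exact (memLp_two_iff_integrable_sq_norm (hφ'L2.sub hcL2).1).1 (hφ'L2.sub hcL2)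

lemma concat (h₁ : InHT n T₁ x φ₁ φ₁') (h₂ : InHT n T₂ y φ₂ φ₂') (hy : φ₁ T₁ = y)
    (hT₁ : 0 ≤ T₁) (hT₂ : 0 ≤ T₂) :
    InHT n (T₁ + T₂) x (concatAt T₁ φ₁ φ₂) (concatAt T₁ φ₁' φ₂') := by
  refine ⟨by rw [concatAt_of_le hT₁, h₁.1], intervalIntegrable_concatAt hT₁ hT₂ h₁.2.1 h₂.2.1,
    (intervalIntegrable_concatAt hT₁ hT₂ h₁.2.2.1 h₂.2.2.1).congr fun t _ => ?_,
    fun t ht => ?_⟩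
  · unfold concatAt; split_ifs <;> rfl
  rcases le_or_gt t T₁ with htT₁ | htT₁
  · rw [concatAt_of_le htT₁, integral_concatAt_of_le ht.1 htT₁]
    exact h₁.2.2.2 t ⟨ht.1, htT₁⟩
  · have ht' : t = T₁ + (t - T₁) := by ring
    have hT₁' : ∫ s in (0 : ℝ)..T₁, φ₁' s = y - x := by
      rw [← hy, h₁.2.2.2 T₁ ⟨hT₁, le_rfl⟩, add_sub_cancel_left]
    rw [concatAt_of_lt htT₁, h₂.2.2.2 (t - T₁) ⟨by linarith, by linarith [ht.2]⟩, ht',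
      integral_concatAt hT₁ (by linarith) h₁.2.1 (h₂.mono (by linarith) (by linarith [ht.2])).2.1,
      hT₁', add_sub_cancel_left]
    abel

lemma rescale (h : InHT n a x φ φ') (ha : 0 ≤ a) (hs : 0 < s) :
    InHT n s x (fun t => φ (a / s * t)) (fun t => (a / s) • φ' (a / s * t)) := by
  have hα : 0 ≤ a / s := by positivity
  refine ⟨by simp [h.1], h.2.1.smul_comp_div_mul s,
    ((h.2.2.1.smul_comp_div_mul s).const_mul (a / s)).congr fun t _ => ?_, fun t ht => ?_⟩
  · simp only [smul_eq_mul, norm_smul, Real.norm_of_nonneg hα]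
    ring
  · have hαt : a / s * t ∈ Icc 0 a := ⟨mul_nonneg hα ht.1, by
      calc a / s * t ≤ a / s * s := by gcongr; exact ht.2
        _ = a := div_mul_cancel₀ a hs.ne'⟩
    simp only
    rw [h.2.2.2 _ hαt, intervalIntegral.integral_smul, intervalIntegral.smul_integral_comp_mul_left,
      mul_zero]

end InHT

lemma work_concatAt (h₁ : InHT n T₁ x φ₁ φ₁') (h₂ : InHT n T₂ y φ₂ φ₂') (hT₁ : 0 ≤ T₁)
    (hT₂ : 0 ≤ T₂) (hb : Continuous b) :
    work b (T₁ + T₂) (concatAt T₁ φ₁ φ₂) (concatAt T₁ φ₁' φ₂') =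
      work b T₁ φ₁ φ₁' + work b T₂ φ₂ φ₂' := by
  rw [work, work, work, ← integral_concatAt hT₁ hT₂ (h₁.intervalIntegrable_inner hT₁ hb)
    (h₂.intervalIntegrable_inner hT₂ hb)]
  congr 1; ext t; unfold concatAt; split_ifs <;> rfl

lemma FW_concatAt (h₁ : InHT n T₁ x φ₁ φ₁') (h₂ : InHT n T₂ y φ₂ φ₂') (hT₁ : 0 ≤ T₁)
    (hT₂ : 0 ≤ T₂) (hc : Continuous c) :
    FW n c (T₁ + T₂) (concatAt T₁ φ₁ φ₂) (concatAt T₁ φ₁' φ₂') =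
      FW n c T₁ φ₁ φ₁' + FW n c T₂ φ₂ φ₂' := by
  rw [FW, FW, FW, ← mul_add, ← integral_concatAt hT₁ hT₂ (h₁.intervalIntegrable_action hT₁ hc)
    (h₂.intervalIntegrable_action hT₂ hc)]
  congr 2; ext t; unfold concatAt; split_ifs <;> rfl

lemma work_rescale (hs : 0 < s) :
    work b s (fun t => φ (a / s * t)) (fun t => (a / s) • φ' (a / s * t)) = work b a φ φ' := by
  simp only [work, real_inner_smul_right]
  rw [intervalIntegral.integral_const_mul, ← smul_eq_mul,
    intervalIntegral.smul_integral_comp_mul_left (fun u => ⟪b (φ u), φ' u⟫_ℝ), mul_zero,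
    div_mul_cancel₀ a hs.ne']

def segmentWork (b : Euc n → Euc n) (y x : Euc n) : ℝ :=
  ∫ u in (0 : ℝ)..1, ⟪b (y + u • (x - y)), x - y⟫_ℝ

lemma continuous_segmentWork (hb : Continuous b) (x : Euc n) :
    Continuous fun y => segmentWork b y x :=
  intervalIntegral.continuous_parametric_intervalIntegral_of_continuous'
    (by fun_prop : Continuous fun p : Euc n × ℝ => ⟪b (p.1 + p.2 • (x - p.1)), x - p.1⟫_ℝ) 0 1

@[simp]
lemma segmentWork_self (b : Euc n → Euc n) (x : Euc n) : segmentWork b x x = 0 := by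
  simp [segmentWork]

lemma inHT_segment (s : ℝ) (y x : Euc n) :
    InHT n s y (fun t => y + (s⁻¹ * t) • (x - y)) (fun _ => s⁻¹ • (x - y)) := by
  refine ⟨by simp, intervalIntegrable_const, intervalIntegrable_const, fun t _ => ?_⟩
  rw [intervalIntegral.integral_const, sub_zero, smul_smul, mul_comm]

lemma work_segment (hs : 0 < s) (y x : Euc n) :
    work b s (fun t => y + (s⁻¹ * t) • (x - y)) (fun _ => s⁻¹ • (x - y)) = segmentWork b y x := by
  simp only [work, real_inner_smul_right]
  rw [intervalIntegral.integral_const_mul, ← smul_eq_mul,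
    intervalIntegral.smul_integral_comp_mul_left (fun u => ⟪b (y + u • (x - y)), x - y⟫_ℝ),
    mul_zero, inv_mul_cancel₀ hs.ne', segmentWork]

lemma exists_loop_of_le (h : InHT n T x φ φ') (hend : φ T = x) (hq : Diss n b T φ φ' = q)
    (hτ : 0 < τ) (hτT : τ ≤ T) (hb : Continuous b) :
    ∃ ψ ψ' : ℝ → Euc n, InHT n τ x ψ ψ' ∧ ψ τ = x ∧ Diss n b τ ψ ψ' = q := by
  have hT : 0 < T := hτ.trans_le hτT
  set f : ℝ → ℝ := fun a => work b a φ φ' + segmentWork b (φ a) x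
  have hf : ContinuousOn f (uIcc 0 T) := by
    rw [uIcc_of_le hT.le]
    have hprim := intervalIntegral.continuousOn_primitive_interval'
      (h.intervalIntegrable_inner hT.le hb) left_mem_uIcc
    rw [uIcc_of_le hT.le] at hprim
    exact hprim.add ((continuous_segmentWork hb x).comp_continuousOn (h.continuousOn hT.le))
  have hfT : f T = q * T / 2 := by
    simp only [f, hend, segmentWork_self, add_zero]
    exact (Diss_eq_iff hT).1 hq
  have hf0 : f 0 = 0 := by simp [f, work, h.1]
  have hmem : q * τ / 2 ∈ uIcc (f 0) (f T) := by
    rw [hf0, hfT, mem_uIcc]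
    rcases le_total 0 q with hq0 | hq0
    · exact Or.inl ⟨by positivity, by nlinarith⟩
    · exact Or.inr ⟨by nlinarith, by nlinarith⟩
  obtain ⟨a, ha, hfa⟩ := intermediate_value_uIcc hf hmem
  rw [uIcc_of_le hT.le] at ha
  -- run `φ|[0, a]` during `[0, τ/2]`, then the segment from `φ a` to `x` during `[τ/2, τ]`
  have hτ2 : 0 < τ / 2 := half_pos hτ
  have hstart := (h.mono ha.1 ha.2).rescale ha.1 hτ2
  have hseg := inHT_segment (τ / 2) (φ a) x
  have hjoin : a / (τ / 2) * (τ / 2) = a := div_mul_cancel₀ a hτ2.ne'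
  refine ⟨concatAt (τ / 2) (fun t => φ (a / (τ / 2) * t))
      (fun t => φ a + ((τ / 2)⁻¹ * t) • (x - φ a)),
    concatAt (τ / 2) (fun t => (a / (τ / 2)) • φ' (a / (τ / 2) * t))
      (fun _ => (τ / 2)⁻¹ • (x - φ a)), ?_, ?_, ?_⟩
  · simpa only [add_halves] using hstart.concat hseg (by simp only [hjoin]) hτ2.le hτ2.le
  · rw [concatAt_of_lt (half_lt_self hτ), sub_half, inv_mul_cancel₀ hτ2.ne', one_smul,
      add_sub_cancel]
  · rw [Diss_eq_iff hτ, ← hfa]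
    have hwork := work_concatAt hstart hseg hτ2.le hτ2.le hb
    rwa [add_halves, work_rescale hτ2, work_segment hτ2] at hwork

def actionSet (n : ℕ) (b c : Euc n → Euc n) (T : ℝ) (x y : Euc n) (q : ℝ) : Set ℝ :=
  { r | ∃ φ φ' : ℝ → Euc n,
    InHT n T x φ φ' ∧ φ T = y ∧ Diss n b T φ φ' = q ∧ FW n c T φ φ' = r }

lemma Sxy_eq_sInf_actionSet : Sxy n b c T x y q = sInf (actionSet n b c T x y q) := rfl

lemma nonneg_of_mem_actionSet (hT : 0 ≤ T) {r : ℝ} (hr : r ∈ actionSet n b c T x y q) :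
    0 ≤ r := by
  obtain ⟨φ, φ', -, -, -, rfl⟩ := hr
  exact FW_nonneg c hT φ φ'

lemma add_mem_actionSet (h₁ : r₁ ∈ actionSet n b c T₁ x y q) (h₂ : r₂ ∈ actionSet n b c T₂ y z q)
    (hT₁ : 0 < T₁) (hT₂ : 0 < T₂) (hb : Continuous b) (hc : Continuous c) :
    r₁ + r₂ ∈ actionSet n b c (T₁ + T₂) x z q := by
  obtain ⟨φ₁, φ₁', hφ₁, hy, hq₁, rfl⟩ := h₁
  obtain ⟨φ₂, φ₂', hφ₂, hz, hq₂, rfl⟩ := h₂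
  refine ⟨concatAt T₁ φ₁ φ₂, concatAt T₁ φ₁' φ₂', hφ₁.concat hφ₂ hy hT₁.le hT₂.le,
    by rw [concatAt_add hT₂, hz], ?_, FW_concatAt hφ₁ hφ₂ hT₁.le hT₂.le hc⟩
  rw [Diss_eq_iff (by positivity), work_concatAt hφ₁ hφ₂ hT₁.le hT₂.le hb,
    (Diss_eq_iff hT₁).1 hq₁, (Diss_eq_iff hT₂).1 hq₂]
  ring

lemma actionSet_nonempty_of_le (hne : (actionSet n b c T x x q).Nonempty) (hτ : 0 < τ)
    (hτT : τ ≤ T) (hb : Continuous b) : (actionSet n b c τ x x q).Nonempty := by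
  obtain ⟨-, φ, φ', hφ, hend, hq, -⟩ := hne
  obtain ⟨ψ, ψ', hψ, hψend, hψq⟩ := exists_loop_of_le hφ hend hq hτ hτT hb
  exact ⟨_, ψ, ψ', hψ, hψend, hψq, rfl⟩

end Paths

/-- subadditivity `S^{xx}_{T₁+T₂}(q) ≤ S^{xx}_{T₁}(q) + S^{xx}_{T₂}(q)`. -/
theorem statement5 (n : ℕ) (V : Euc n → ℝ) (b c : Euc n → Euc n)
    (hA : AssumptionA n V) (hB : AssumptionB n b)
    (hc : ∀ z, c z = -(1/2 : ℝ) • gradient V z + b z)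
    (x : Euc n) (q : ℝ) (T₁ T₂ : ℝ) (hT₁ : 0 < T₁) (hT₂ : 0 < T₂) :
    Sxy n b c (T₁ + T₂) x x q ≤ Sxy n b c T₁ x x q + Sxy n b c T₂ x x q := by
  have hb : Continuous b := hB.1.continuous
  have hcont : Continuous c := by
    rw [show c = _ from funext hc]
    exact ((hA.1.continuous_gradient two_ne_zero).const_smul (-(1 / 2 : ℝ))).add hb
  simp only [Sxy_eq_sInf_actionSet]
  refine sInf_le_sInf_add_sInf (fun _ => nonneg_of_mem_actionSet hT₁.le)
    (fun _ => nonneg_of_mem_actionSet hT₂.le)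
    ⟨0, fun _ => nonneg_of_mem_actionSet (by positivity)⟩ ?_
    fun hne => ⟨actionSet_nonempty_of_le hne hT₁ (by linarith) hb,
      actionSet_nonempty_of_le hne hT₂ (by linarith) hb⟩
  rintro _ ⟨r₁, h₁, r₂, h₂, rfl⟩
  exact add_mem_actionSet h₁ h₂ hT₁ hT₂ hb hcont
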